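/- arXiv:0811.1168 — 3 statements merged into one kernel-verified Lean document; each statement's English description precedes it below -/
import Mathlib

section
/- For any prime p and any natural number k, the integer (kp)!/((p!)^k · k!) is congruent to 1 modulo p. -/
/-!
The quotient is `Nat.uniformBell k p`, the number of partitions of a `k p`-set into `k` blocks of
size `p`. Choosing the block of a fixed element gives
`uniformBell (m + 1) p = choose (m p + (p - 1)) (p - 1) * uniformBell m p`, and by Lucas's theorem
each of these binomial coefficients is `≡ 1 [MOD p]`, since `m p + (p - 1)` has last base-`p`
digit `p - 1`.
-/

open Nat

theorem Nat.choose_mul_add_modEq_one {p : ℕ} [Fact p.Prime] (a : ℕ) {b : ℕ} (hb : b < p) :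
    (a * p + b).choose b ≡ 1 [MOD p] := by
  have lucas := Choose.choose_modEq_choose_mod_mul_choose_div_nat (n := a * p + b) (k := b) (p := p)
  rwa [Nat.mul_add_mod_of_lt hb, Nat.mod_eq_of_lt hb, Nat.div_eq_of_lt hb, Nat.choose_self,
    Nat.choose_zero_right, mul_one] at lucas

theorem Nat.uniformBell_modEq_one {p : ℕ} [Fact p.Prime] (m : ℕ) :
    m.uniformBell p ≡ 1 [MOD p] := by
  have hp : 0 < p := Nat.pos_of_ne_zero (Fact.out : p.Prime).ne_zero
  induction m with
  | zero => rw [uniformBell_zero_left]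
  | succ m ih =>
    rw [uniformBell_succ_left, Nat.add_sub_assoc hp]
    simpa using (Nat.choose_mul_add_modEq_one m (Nat.sub_lt hp one_pos)).mul ih

/-- For any prime `p` and any natural number `k`, the integer
`(kp)! / ((p!)^k * k!)` is congruent to `1` modulo `p`. -/
theorem stmt_0 (p : ℕ) (hp : p.Prime) (k : ℕ) :
    Nat.factorial (k * p) / (Nat.factorial p ^ k * Nat.factorial k) ≡ 1 [MOD p] := by
  have : Fact p.Prime := ⟨hp⟩
  rw [← uniformBell_eq_div k hp.ne_zero]
  exact uniformBell_modEq_one k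
end

section
/- Let p be a prime, m ≥ 1, and 1 ≤ k ≤ p. Then C(p^{m+1} − 1, k·p^m − 1) ≡ (−1)^{k+1} modulo p. -/
lemma aux_choose_prime_sub_one (p : ℕ) (hp : p.Prime) [Fact p.Prime] (r : ℕ) (hr : r ≤ p - 1) :
    ((Nat.choose (p - 1) r : ZMod p)) = (-1) ^ r := by
  have hp2 := hp.two_le
  induction r with
  | zero => simp
  | succ r ih =>
    have hrp : r + 1 < p := by omega
    have pascal : (p - 1).choose r + (p - 1).choose (r + 1) = (p - 1 + 1).choose (r + 1) :=
      (Nat.choose_succ_succ' _ _).symm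
    rw [show p - 1 + 1 = p from by omega] at pascal
    have hdvd : p ∣ p.choose (r + 1) := Nat.Prime.dvd_choose_self hp (by omega) hrp
    have hz : ((p - 1).choose r : ZMod p) + ((p - 1).choose (r + 1) : ZMod p) = 0 := by
      have h := congrArg (Nat.cast : ℕ → ZMod p) pascal
      push_cast at h
      rw [h]
      exact_mod_cast (ZMod.natCast_eq_zero_iff _ _).mpr hdvd
    have ihr := ih (by omega)
    rw [ihr] at hz
    rw [pow_succ]
    linear_combination hz

lemma aux_choose_pow_sub_one (p : ℕ) (hp : p.Prime) [Fact p.Prime] (n : ℕ) :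
    ∀ j ≤ p ^ n - 1, ((Nat.choose (p ^ n - 1) j : ZMod p)) = (-1) ^ j := by
  induction n with
  | zero =>
    intro j hj
    simp only [pow_zero] at hj
    have : j = 0 := by omega
    subst this; simp
  | succ n ih =>
    intro j hj
    have hp2 := hp.two_le
    have hpn : 1 ≤ p ^ n := Nat.one_le_pow _ _ (by omega)
    have hpp : p ^ (n + 1) = p * p ^ n := by ring
    have e1 : p * (p ^ n - 1) + p = p * p ^ n := by
      rw [← Nat.mul_succ, Nat.succ_eq_add_one, Nat.sub_add_cancel hpn]
    have h : p ^ (n + 1) - 1 = p * (p ^ n - 1) + (p - 1) := by omega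
    have hmod : (p ^ (n + 1) - 1) % p = p - 1 := by
      rw [h, Nat.mul_add_mod, Nat.mod_eq_of_lt (by omega)]
    have hdiv : (p ^ (n + 1) - 1) / p = p ^ n - 1 := by
      rw [h, Nat.mul_add_div (by omega), Nat.div_eq_of_lt (by omega), Nat.add_zero]
    have key := @Choose.choose_modEq_choose_mod_mul_choose_div (p ^ (n + 1) - 1) j p _
    have key' : ((Nat.choose (p ^ (n + 1) - 1) j : ZMod p)) =
        ((Nat.choose (p - 1) (j % p) : ZMod p)) * ((Nat.choose (p ^ n - 1) (j / p) : ZMod p)) := by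
      have hc := (ZMod.intCast_eq_intCast_iff' _ _ _).mpr key
      push_cast at hc
      rw [hmod, hdiv] at hc
      exact_mod_cast hc
    have hjm : j % p ≤ p - 1 := by
      have := Nat.mod_lt j (show 0 < p by omega)
      omega
    have hjd : j / p ≤ p ^ n - 1 := by
      have := Nat.div_le_div_right (c := p) hj
      rw [hdiv] at this
      exact this
    rw [key', aux_choose_prime_sub_one p hp _ hjm, ih (j / p) hjd]
    have hpow : (-1 : ZMod p) ^ p = -1 := by
      rcases hp.eq_two_or_odd' with h2 | hodd
      · subst h2
        rfl
      · exact hodd.neg_one_pow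
    calc (-1 : ZMod p) ^ (j % p) * (-1) ^ (j / p)
        = (-1) ^ (j % p) * ((-1) ^ p) ^ (j / p) := by rw [hpow]
      _ = (-1) ^ (j % p + p * (j / p)) := by rw [pow_add, ← pow_mul]
      _ = (-1) ^ j := by rw [Nat.mod_add_div]

/-- Let `p` be a prime, `m ≥ 1`, and `1 ≤ k ≤ p`.  Then
`C(p^{m+1} − 1, k·p^m − 1) ≡ (−1)^{k+1} mod p`. -/
theorem stmt_7 (p : ℕ) (hp : p.Prime) (m : ℕ) (hm : 1 ≤ m) (k : ℕ)
    (hk1 : 1 ≤ k) (hk : k ≤ p) :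
    ((Nat.choose (p ^ (m + 1) - 1) (k * p ^ m - 1) : ℤ)) ≡
      (-1) ^ (k + 1) [ZMOD (p : ℤ)] := by
  haveI : Fact p.Prime := ⟨hp⟩
  have hp2 := hp.two_le
  have hpm : 1 ≤ p ^ m := Nat.one_le_pow _ _ (by omega)
  have hj : k * p ^ m - 1 ≤ p ^ (m + 1) - 1 := by
    have h1 : k * p ^ m ≤ p * p ^ m := Nat.mul_le_mul_right _ hk
    have h2 : p * p ^ m = p ^ (m + 1) := by ring
    omega
  have hch := aux_choose_pow_sub_one p hp (m + 1) _ hj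
  apply (ZMod.intCast_eq_intCast_iff' _ _ _).mp
  push_cast
  rw [hch]
  rcases hp.eq_two_or_odd' with h2 | hodd
  · subst h2
    have hone : (-1 : ZMod 2) = 1 := rfl
    rw [hone]; simp
  · have hpmo : Odd (p ^ m) := hodd.pow
    rcases Nat.even_or_odd k with hke | hko
    · have h1 : Odd (k * p ^ m - 1) := by
        obtain ⟨t, ht⟩ := hke.mul_right (p ^ m)
        have hprod : 1 ≤ k * p ^ m := Nat.one_le_iff_ne_zero.mpr (by positivity)
        exact ⟨t - 1, by omega⟩
      rw [h1.neg_one_pow, (hke.add_one).neg_one_pow]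
    · have h1 : Even (k * p ^ m - 1) := by
        obtain ⟨t, ht⟩ := hko.mul hpmo
        exact ⟨t, by omega⟩
      rw [h1.neg_one_pow, (hko.add_one).neg_one_pow]
end

section
/- Define, for a natural number k and fixed prime p and level m, q_k = ⌊k/p^m⌋, and the level-m divided binomial {k+l choose k}_m := q_{k+l}!/(q_k!·q_l!). Then {k+l choose k}_m is an integer, and moreover C(k+l,k)/{k+l choose k}_m ∈ Z_(p) (the p-local integers), i.e. {k+l choose k}_m divides C(k+l,k) up to a unit in Z_(p). -/
/-! By Legendre, `v_p(x!) = ⌊x/p⌋ + v_p(⌊x/p⌋!)`, so replacing `a, b, c` by `⌊a/p⌋, ⌊b/p⌋, ⌊c/p⌋`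
lowers `v_p(c!/(a! b!))` by `⌊c/p⌋ - ⌊a/p⌋ - ⌊b/p⌋`, which is nonnegative as long as `a + b ≤ c`.
Iterating `m` times from `(a, b, c) = (k, l, k + l)` shows that the `p`-adic valuation of
`q_{k+l}!/(q_k! q_l!)` is at most that of `C(k+l, k)`. -/

open Nat

section

variable {p : ℕ} [Fact p.Prime]

theorem padicValNat_factorial_eq_factorial_div_add_div (n : ℕ) :
    padicValNat p n ! = padicValNat p (n / p)! + n / p := by
  rw [← padicValNat_mul_div_factorial, padicValNat_factorial_mul]

theorem padicValNat_factorial_div_pow_add_le {a b c : ℕ} (habc : a + b ≤ c) (j : ℕ) :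
    padicValNat p (c / p ^ j)! + padicValNat p a ! + padicValNat p b ! ≤
      padicValNat p c ! + padicValNat p (a / p ^ j)! + padicValNat p (b / p ^ j)! := by
  induction j with
  | zero => simp
  | succ j ih =>
    have hstep (x : ℕ) :
        padicValNat p (x / p ^ j)! = padicValNat p (x / p ^ (j + 1))! + x / p ^ (j + 1) := by
      rw [pow_succ, ← Nat.div_div_eq_div_mul, padicValNat_factorial_eq_factorial_div_add_div]
    have hquot : a / p ^ (j + 1) + b / p ^ (j + 1) ≤ c / p ^ (j + 1) :=
      Nat.div_add_div_le_add_div.trans (Nat.div_le_div_right habc)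
    rw [hstep a, hstep b, hstep c] at ih
    omega

theorem padicValNat_add_padicValNat_factorial_add {n a b c : ℕ} (h : n * (a ! * b !) = c !) :
    padicValNat p n + padicValNat p a ! + padicValNat p b ! = padicValNat p c ! := by
  have hn : n ≠ 0 := by
    rintro rfl
    exact c.factorial_ne_zero (by rw [← h, zero_mul])
  rw [← h, padicValNat.mul hn (by positivity),
    padicValNat.mul a.factorial_ne_zero b.factorial_ne_zero, add_assoc]

end

/-- For `q_k = ⌊k/p^m⌋`, the level-`m` divided binomial
`{k+l choose k}_m = q_{k+l}!/(q_k!·q_l!)` is an integer `n`, and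
`C(k+l,k)/n` lies in `ℤ_(p)`, i.e. has nonnegative `p`-adic valuation. -/
theorem stmt_15 (p : ℕ) (hp : p.Prime) (m k l : ℕ) :
    ∃ n : ℕ,
      n * (Nat.factorial (k / p ^ m) * Nat.factorial (l / p ^ m)) =
        Nat.factorial ((k + l) / p ^ m) ∧
      0 ≤ padicValRat p ((Nat.choose (k + l) k : ℚ) / (n : ℚ)) := by
  have : Fact p.Prime := ⟨hp⟩
  have hdvd : (k / p ^ m)! * (l / p ^ m)! ∣ ((k + l) / p ^ m)! :=
    (factorial_mul_factorial_dvd_factorial_add _ _).trans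
      (factorial_dvd_factorial Nat.div_add_div_le_add_div)
  set n := ((k + l) / p ^ m)! / ((k / p ^ m)! * (l / p ^ m)!)
  have hn : n * ((k / p ^ m)! * (l / p ^ m)!) = ((k + l) / p ^ m)! := Nat.div_mul_cancel hdvd
  refine ⟨n, hn, ?_⟩
  have hchoose : (k + l).choose k * (k ! * l !) = (k + l)! := by
    rw [add_comm k l, mul_comm k !, ← mul_assoc]
    exact add_choose_mul_factorial_mul_factorial l k
  have hvn := padicValNat_add_padicValNat_factorial_add (p := p) hn
  have hvchoose := padicValNat_add_padicValNat_factorial_add (p := p) hchoose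
  have hle := padicValNat_factorial_div_pow_add_le (p := p) (le_refl (k + l)) m
  have hn0 : n ≠ 0 := by
    intro h
    exact factorial_ne_zero _ (by rw [← hn, h, zero_mul])
  rw [padicValRat.div (by exact_mod_cast (choose_pos (Nat.le_add_right k l)).ne')
      (by exact_mod_cast hn0), padicValRat.of_nat, padicValRat.of_nat, sub_nonneg]
  exact_mod_cast (by omega : padicValNat p n ≤ padicValNat p ((k + l).choose k))
end
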